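/- Let n ≥ 1. The third moment of the complex equatorial stabilizer ensemble satisfies (1/|𝒜ₙ|) Σ_{A ∈ 𝒜ₙ} (φ^{eq}_A (φ^{eq}_A)†)^{⊗3} = (1/8ⁿ) Σ_{(x,y,z,w,s,t) ∈ 𝒦₂} |x y z⟩⟨w s t|, where 𝒦₂ is the set of 6-tuples (x,y,z,w,s,t) of bit strings in {0,1}ⁿ such that (i) there exists a partition of {1,…,6} into three pairs {(i₁,j₁),(i₂,j₂),(i₃,j₃)} with v_{i_k} = v_{j_k} for k = 1,2,3, writing (v₁,…,v₆) = (x,y,z,w,s,t), and (ii) for every coordinate p ∈ {1,…,n}, x_p + y_p + z_p = w_p + s_p + t_p as integers (entries read as 0/1 integers). -/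

import Mathlib

open Finset Matrix

/-- Bit strings of length `n`, with entries viewed as `0/1` integers via `Fin 2`. -/
abbrev Bits (n : ℕ) := Fin n → Fin 2

/-- The index set `𝒜ₙ`: symmetric `n × n` matrices with diagonal entries in `{0,1,2,3}`
and off-diagonal entries in `{0,1}` (encoded inside `Fin 4`). -/
def An (n : ℕ) : Finset (Matrix (Fin n) (Fin n) (Fin 4)) :=
  @Finset.filter _ (fun A => (∀ i j, A i j = A j i) ∧ ∀ i j, i ≠ j → (A i j : ℕ) < 2)
    (fun A => @instDecidableAnd _ _
      (@Nat.decidableForallFin _ _ fun i => @Nat.decidableForallFin _ _ fun j =>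
        instDecidableEqFin 4 (A i j) (A j i)) inferInstance) Finset.univ

/-- The quadratic form `xᵀ A x`, computed in `ℤ` (here in `ℕ`). -/
def quadA {n : ℕ} (A : Matrix (Fin n) (Fin n) (Fin 4)) (x : Bits n) : ℕ :=
  ∑ i, ∑ j, (A i j : ℕ) * (x i : ℕ) * (x j : ℕ)

/-- The complex equatorial stabilizer state `φ^{eq}_A`. -/
noncomputable def phiEq {n : ℕ} (A : Matrix (Fin n) (Fin n) (Fin 4)) (x : Bits n) : ℂ :=
  Complex.I ^ quadA A x / (Real.sqrt (2 ^ n) : ℂ)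

/-- The rank-one projector `φ φ†` onto a vector `φ`. -/
noncomputable def outer {ι : Type*} (φ : ι → ℂ) : Matrix ι ι ℂ :=
  Matrix.of fun x y => φ x * (starRingEnd ℂ) (φ y)

/-- The Kronecker (tensor) cube of a matrix, indexed by triples. -/
def kron3 {ι : Type*} (M : Matrix ι ι ℂ) : Matrix (ι × ι × ι) (ι × ι × ι) ℂ :=
  Matrix.of fun p q => M p.1 q.1 * M p.2.1 q.2.1 * M p.2.2 q.2.2

/-- A 6-tuple `v` is "paired" if `{1,…,6}` partitions into three pairs on which `v`
agrees; equivalently there is a fixed-point-free involution `σ` of `Fin 6` with `v ∘ σ = v`. -/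
def Paired {α : Type*} (v : Fin 6 → α) : Prop :=
  ∃ σ : Equiv.Perm (Fin 6), (∀ k, σ k ≠ k) ∧ (∀ k, σ (σ k) = k) ∧ (∀ k, v (σ k) = v k)

instance {α : Type*} [DecidableEq α] (v : Fin 6 → α) : Decidable (Paired v) := by
  unfold Paired; infer_instance

/-- Membership in `𝒦₂`: the tuple is paired, and moreover for every coordinate `p`
the integer sums `x_p + y_p + z_p` and `w_p + s_p + t_p` agree. -/
def MemK2 {n : ℕ} (v : Fin 6 → Bits n) : Prop :=
  Paired v ∧ ∀ p : Fin n,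
    (v 0 p : ℕ) + (v 1 p : ℕ) + (v 2 p : ℕ) = (v 3 p : ℕ) + (v 4 p : ℕ) + (v 5 p : ℕ)

instance {n : ℕ} (v : Fin 6 → Bits n) : Decidable (MemK2 v) := by
  unfold MemK2; infer_instance

/-! Entrywise, the left-hand side at row `(x, y, z)` and column `(w, s, t)` is `8⁻ⁿ` times the
average over `A ∈ 𝒜ₙ` of `i ^ ∑ᵢⱼ Aᵢⱼ Gᵢⱼ`, where `G = xxᵀ + yyᵀ + zzᵀ - wwᵀ - ssᵀ - ttᵀ` mod 4.
Adding `1` to a diagonal entry `A_kk`, or flipping an off-diagonal pair `A_kl = A_lk` between `0`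
and `1`, permutes `𝒜ₙ` and multiplies the summand by `i ^ G_kk`, resp. `(-1) ^ G_kl`; so the
average is `1` when all `G_kk ≡ 0 (mod 4)` and all `G_kl` are even, and `0` otherwise.

The diagonal condition says `x_p + y_p + z_p = w_p + s_p + t_p`. Then every non-constant column
`(x_p, y_p, z_p | w_p, s_p, t_p)` has a unique odd-one-out position on each side; the parity of
the `G_pq` says that two such columns have the same position on the ket side iff they do on the
bra side. The matching of ket positions to bra positions they define therefore extends to a
permutation `π` of `Fin 3`, and then the `i`-th ket equals the `π i`-th bra.
-/

def powI : AddChar (ZMod 4) ℂ where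
  toFun a := Complex.I ^ a.val
  map_zero_eq_one' := by simp
  map_add_eq_mul' a b := by rw [ZMod.val_add, ← Complex.I_pow_eq_pow_mod, pow_add]

lemma powI_natCast (m : ℕ) : powI m = Complex.I ^ m := by
  rw [Complex.I_pow_eq_pow_mod]
  simp [powI, ZMod.val_natCast]

lemma powI_eq_one_iff {a : ZMod 4} : powI a = 1 ↔ a = 0 := by
  change Complex.I ^ a.val = 1 ↔ a = 0
  rw [← ZMod.val_eq_zero]
  have : a.val < 4 := ZMod.val_lt a
  interval_cases a.val <;> norm_num [pow_succ, Complex.ext_iff]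

theorem Finset.sum_eq_zero_of_perm_mul {α K : Type*} [CommRing K] [IsDomain K] {s : Finset α}
    {f : α → K} (τ : Equiv.Perm α) (hs : ∀ a, a ∈ s ↔ τ a ∈ s) {c : K} (hc : c ≠ 1)
    (hf : ∀ a ∈ s, f (τ a) = c * f a) : ∑ a ∈ s, f a = 0 := by
  have h : ∑ a ∈ s, f a = c * ∑ a ∈ s, f a := by
    rw [mul_sum]
    exact (sum_equiv τ hs fun a ha => (hf a ha).symm).symm
  by_contra hS
  exact hc (mul_right_cancel₀ hS (by rw [one_mul]; exact h.symm))

section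

variable {n : ℕ}

lemma mem_An {A : Matrix (Fin n) (Fin n) (Fin 4)} :
    A ∈ An n ↔ (∀ i j, A i j = A j i) ∧ ∀ i j, i ≠ j → (A i j : ℕ) < 2 := by
  simp [An]

lemma An_nonempty : (An n).Nonempty := ⟨0, by simp [mem_An]⟩

def pairing (G : Matrix (Fin n) (Fin n) (ZMod 4)) (A : Matrix (Fin n) (Fin n) (Fin 4)) :
    ZMod 4 :=
  ∑ i, ∑ j, ((A i j : ℕ) : ZMod 4) * G i j

lemma pairing_add (G : Matrix (Fin n) (Fin n) (ZMod 4)) (A B : Matrix (Fin n) (Fin n) (Fin 4)) :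
    pairing G (A + B) = pairing G A + pairing G B := by
  simp [pairing, Fin.val_add, add_mul, sum_add_distrib]

lemma pairing_single (G : Matrix (Fin n) (Fin n) (ZMod 4)) (k : Fin n) :
    pairing G (single k k 1) = G k k := by
  simp [pairing, single_apply, ite_and, apply_ite]

lemma pairing_eq_zero {G : Matrix (Fin n) (Fin n) (ZMod 4)} (hG : G.IsSymm)
    (hdiag : ∀ i, G i i = 0) (htwo : ∀ i j, 2 * G i j = 0) {A : Matrix (Fin n) (Fin n) (Fin 4)}
    (hA : A ∈ An n) : pairing G A = 0 := by
  rw [pairing, ← Fintype.sum_prod_type']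
  refine sum_ninvolution Prod.swap (fun ⟨i, j⟩ => ?_) (fun ⟨i, j⟩ hne hij => ?_)
    (fun _ => mem_univ _) Prod.swap_swap
  · simp only [Prod.swap_prod_mk, (mem_An.1 hA).1 j i, hG.apply i j]
    rw [← two_mul, mul_left_comm, htwo, mul_zero]
  · obtain rfl : j = i := congrArg Prod.fst hij
    exact hne (by simp [hdiag])

lemma mem_An_iff_add_single_mem (k : Fin n) (A : Matrix (Fin n) (Fin n) (Fin 4)) :
    A ∈ An n ↔ A + single k k 1 ∈ An n := by
  simp only [mem_An, Matrix.add_apply, single_apply]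
  refine and_congr (forall₂_congr fun i j => ?_)
    (forall₂_congr fun i j => forall_congr' fun hij => ?_)
  · by_cases hi : k = i <;> by_cases hj : k = j <;> simp [hi, hj, eq_comm]
  · have hk : ¬(k = i ∧ k = j) := fun h => hij (h.1 ▸ h.2)
    simp [hk]

def flipPair (k l : Fin n) : Equiv.Perm (Matrix (Fin n) (Fin n) (Fin 4)) :=
  Function.Involutive.toPerm
    (fun A => of fun i j => if s(i, j) = s(k, l) then 1 - A i j else A i j)
    (fun A => by ext i j; simp only [of_apply]; split_ifs <;> simp)

lemma flipPair_apply (k l : Fin n) (A : Matrix (Fin n) (Fin n) (Fin 4)) (i j : Fin n) :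
    flipPair k l A i j = if s(i, j) = s(k, l) then 1 - A i j else A i j := rfl

lemma mem_An_iff_flipPair_mem (k l : Fin n) (A : Matrix (Fin n) (Fin n) (Fin 4)) :
    A ∈ An n ↔ flipPair k l A ∈ An n := by
  have hbit : ∀ a : Fin 4, ((1 - a : Fin 4) : ℕ) < 2 ↔ (a : ℕ) < 2 := by decide
  have hsymm : ∀ i j, flipPair k l A i j = flipPair k l A j i ↔ A i j = A j i := by
    intro i j
    simp only [flipPair_apply, Sym2.eq_swap (a := j)]
    split_ifs <;> simp
  have hbits : ∀ i j, ((flipPair k l A i j : ℕ) < 2 ↔ (A i j : ℕ) < 2) := by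
    intro i j
    rw [flipPair_apply]
    split_ifs
    exacts [hbit _, Iff.rfl]
  simp only [mem_An, hsymm, hbits]

lemma pairing_flipPair {G : Matrix (Fin n) (Fin n) (ZMod 4)} (hG : G.IsSymm) {k l : Fin n}
    (hkl : k ≠ l) {A : Matrix (Fin n) (Fin n) (Fin 4)} (hA : A ∈ An n) :
    pairing G (flipPair k l A) = pairing G A + 2 * G k l := by
  have hval : ∀ a : Fin 4, (((1 - a : Fin 4) : ℕ) : ZMod 4) = 1 - (a : ℕ) := by decide
  rw [← sub_eq_iff_eq_add', pairing, pairing]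
  simp only [← sum_sub_distrib, ← sub_mul]
  rw [← Fintype.sum_prod_type'
      (fun i j => (((flipPair k l A i j : ℕ) : ZMod 4) - (A i j : ℕ)) * G i j),
    Fintype.sum_eq_add (k, l) (l, k) (by simp [hkl])]
  · simp only [flipPair_apply, Sym2.eq_swap (a := l), if_true, hval, (mem_An.1 hA).1 l k,
      hG.apply k l]
    -- `(1 - 2a) (G_kl + G_lk) = 2 G_kl - 4 a G_kl`, independently of the entry `a`
    have h4 : (4 : ZMod 4) = 0 := rfl
    linear_combination (-((A k l : ℕ) : ZMod 4) * G k l) * h4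
  · rintro ⟨i, j⟩ hij
    have : s(i, j) ≠ s(k, l) := by simp_all
    simp [flipPair_apply, this]

theorem sum_An_powI_pairing {G : Matrix (Fin n) (Fin n) (ZMod 4)} (hG : G.IsSymm) :
    ∑ A ∈ An n, powI (pairing G A) =
      if (∀ i, G i i = 0) ∧ ∀ i j, 2 * G i j = 0 then ((An n).card : ℂ) else 0 := by
  have diag_case : ∀ k, G k k ≠ 0 → ∑ A ∈ An n, powI (pairing G A) = 0 := fun k hk =>
    sum_eq_zero_of_perm_mul (Equiv.addRight (single k k 1)) (mem_An_iff_add_single_mem k)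
      (powI_eq_one_iff.not.2 hk) fun A _ => by
        rw [Equiv.coe_addRight, pairing_add, pairing_single, AddChar.map_add_eq_mul, mul_comm]
  split_ifs with h
  · rw [card_eq_sum_ones, Nat.cast_sum]
    refine sum_congr rfl fun A hA => ?_
    rw [pairing_eq_zero hG h.1 h.2 hA, AddChar.map_zero_eq_one, Nat.cast_one]
  · simp only [not_and_or, not_forall] at h
    rcases h with ⟨k, hk⟩ | ⟨k, l, hkl⟩
    · exact diag_case k hk
    · by_cases hkl' : k = l
      · subst hkl'
        exact diag_case k fun h => hkl (by rw [h, mul_zero])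
      · exact sum_eq_zero_of_perm_mul (flipPair k l) (mem_An_iff_flipPair_mem k l)
          (powI_eq_one_iff.not.2 hkl) fun A hA => by
            rw [pairing_flipPair hG hkl' hA, AddChar.map_add_eq_mul, mul_comm]

def signedGram {ι : Type*} [Fintype ι] (u u' : ι → Bits n) : Matrix (Fin n) (Fin n) (ZMod 4) :=
  of fun p q =>
    ∑ k, (((u k p : ℕ) : ZMod 4) * (u k q : ℕ) - ((u' k p : ℕ) : ZMod 4) * (u' k q : ℕ))

lemma signedGram_isSymm {ι : Type*} [Fintype ι] (u u' : ι → Bits n) :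
    (signedGram u u').IsSymm :=
  IsSymm.ext fun p q => by simp only [signedGram, of_apply, mul_comm]

lemma natCast_quadA (A : Matrix (Fin n) (Fin n) (Fin 4)) (x : Bits n) :
    ((quadA A x : ℕ) : ZMod 4) =
      ∑ i, ∑ j, ((A i j : ℕ) : ZMod 4) * (((x i : ℕ) : ZMod 4) * (x j : ℕ)) := by
  simp [quadA, mul_assoc]

lemma pairing_signedGram {ι : Type*} [Fintype ι] (A : Matrix (Fin n) (Fin n) (Fin 4))
    (u u' : ι → Bits n) :
    pairing (signedGram u u') A = ∑ k, ((quadA A (u k) : ZMod 4) - quadA A (u' k)) := by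
  simp only [pairing, signedGram, of_apply, natCast_quadA, ← sum_sub_distrib, mul_sum, mul_sub]
  rw [sum_congr rfl fun i _ => sum_comm, sum_comm]

lemma outer_phiEq_apply (A : Matrix (Fin n) (Fin n) (Fin 4)) (x w : Bits n) :
    outer (phiEq A) x w = powI (quadA A x - quadA A w) / 2 ^ n := by
  have hsq : ((√(2 ^ n) : ℝ) : ℂ) * ((√(2 ^ n) : ℝ) : ℂ) = 2 ^ n := by
    rw [← Complex.ofReal_mul, Real.mul_self_sqrt (by positivity)]
    push_cast; rfl
  simp only [outer, phiEq, of_apply, map_div₀, Complex.conj_ofReal, ← powI_natCast,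
    ← AddChar.map_neg_eq_conj, sub_eq_add_neg, AddChar.map_add_eq_mul]
  rw [div_mul_div_comm, hsq]

lemma kron3_outer_phiEq_apply (A : Matrix (Fin n) (Fin n) (Fin 4)) (x y z w s t : Bits n) :
    kron3 (outer (phiEq A)) (x, y, z) (w, s, t) =
      powI (pairing (signedGram ![x, y, z] ![w, s, t]) A) / 8 ^ n := by
  have h8 : (8 : ℂ) ^ n = 2 ^ n * 2 ^ n * 2 ^ n := by rw [← mul_pow, ← mul_pow]; norm_num
  simp only [kron3, of_apply, outer_phiEq_apply, pairing_signedGram, Fin.sum_univ_three,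
    Matrix.cons_val_zero, Matrix.cons_val_one, Matrix.cons_val_two, Matrix.tail_cons,
    Matrix.head_cons, AddChar.map_add_eq_mul, h8]
  ring

lemma sum_single_memK2_apply (x y z w s t : Bits n) :
    (∑ v ∈ univ.filter (fun v : Fin 6 → Bits n => MemK2 v),
        single (v 0, v 1, v 2) (v 3, v 4, v 5) (1 : ℂ)) (x, y, z) (w, s, t) =
      if MemK2 ![x, y, z, w, s, t] then 1 else 0 := by
  have key : ∀ v : Fin 6 → Bits n,
      ((v 0, v 1, v 2) = (x, y, z) ∧ (v 3, v 4, v 5) = (w, s, t)) ↔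
        v = ![x, y, z, w, s, t] := by
    intro v
    simp [funext_iff, Fin.forall_fin_succ, and_assoc]
  simp only [Matrix.sum_apply, single_apply, key, sum_ite_eq', mem_filter, mem_univ, true_and]

lemma Paired.sum_eq_zero {α M : Type*} [AddCommMonoid M] {v : Fin 6 → α} (hv : Paired v)
    (f : α → M) (hf : ∀ a, f a + f a = 0) : ∑ k, f (v k) = 0 := by
  obtain ⟨σ, hfix, hinv, hσ⟩ := hv
  exact sum_ninvolution σ (fun k => by rw [hσ]; exact hf _) (fun k _ => hfix k)
    (fun _ => mem_univ _) hinv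

lemma paired_append_of_perm {α : Type*} {u u' : Fin 3 → α} (π : Equiv.Perm (Fin 3))
    (h : ∀ i, u i = u' (π i)) : Paired (Fin.append u u') := by
  let σ : Fin (3 + 3) → Fin (3 + 3) :=
    Fin.append (fun i => Fin.natAdd 3 (π i)) (fun j => Fin.castAdd 3 (π.symm j))
  have hσ : σ.Involutive := fun k => by
    refine Fin.addCases (fun i => ?_) (fun j => ?_) k <;>
      simp only [σ, Fin.append_left, Fin.append_right, Equiv.symm_apply_apply,
        Equiv.apply_symm_apply]
  refine ⟨hσ.toPerm, fun k => ?_, hσ, fun k => ?_⟩ <;>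
    refine Fin.addCases (m := 3) (n := 3) (fun i => ?_) (fun j => ?_) k <;>
    simp only [σ, Function.Involutive.coe_toPerm, Fin.append_left, Fin.append_right]
  · intro h
    have := i.isLt
    simp [Fin.ext_iff] at h
    omega
  · intro h
    simp [Fin.ext_iff] at h
    omega
  · exact (h i).symm
  · rw [h, Equiv.apply_symm_apply]

/-- The position of the entry that differs from the other two; junk on a constant triple. -/
def oddOne (a : Fin 3 → Fin 2) : Fin 3 :=
  if a 1 = a 2 then 0 else if a 0 = a 2 then 1 else 2

set_option synthInstance.maxSize 2000 in
set_option maxRecDepth 10000 in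
theorem oddOne_eq_iff_of_parity : ∀ a b a' b' : Fin 3 → Fin 2,
    ∑ k, (a k : ℕ) = ∑ k, (b k : ℕ) → ∑ k, (a' k : ℕ) = ∑ k, (b' k : ℕ) →
    (¬∀ k k', a k = a k') → (¬∀ k k', a' k = a' k') →
    ∑ k, (((a k : ℕ) : ZMod 2) * (a' k : ℕ) + ((b k : ℕ) : ZMod 2) * (b' k : ℕ)) = 0 →
    (oddOne a = oddOne a' ↔ oddOne b = oddOne b') := by
  decide

set_option maxRecDepth 10000 in
theorem apply_eq_apply_perm_of_oddOne : ∀ (a b : Fin 3 → Fin 2) (π : Equiv.Perm (Fin 3)),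
    ∑ k, (a k : ℕ) = ∑ k, (b k : ℕ) → ((∀ k k', a k = a k') ∨ π (oddOne a) = oddOne b) →
    ∀ i, a i = b (π i) := by
  decide

set_option maxRecDepth 10000 in
theorem exists_perm_extending_matching : ∀ R : Fin 3 → Fin 3 → Bool,
    (∀ i i' j j', R i j → R i' j' → (i = i' ↔ j = j')) →
    ∃ π : Equiv.Perm (Fin 3), ∀ i j, R i j → π i = j := by
  decide

theorem exists_perm_of_parity {u u' : Fin 3 → Bits n}
    (hw : ∀ p, ∑ k, (u k p : ℕ) = ∑ k, (u' k p : ℕ))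
    (hpar : ∀ p q,
      ∑ k, (((u k p : ℕ) : ZMod 2) * (u k q : ℕ) + ((u' k p : ℕ) : ZMod 2) * (u' k q : ℕ)) = 0) :
    ∃ π : Equiv.Perm (Fin 3), ∀ i, u i = u' (π i) := by
  classical
  obtain ⟨π, hπ⟩ := exists_perm_extending_matching
    (fun i j => decide
      (∃ p, (¬∀ k k', u k p = u k' p) ∧ oddOne (u · p) = i ∧ oddOne (u' · p) = j))
    (by
      intro i i' j j' h h'
      obtain ⟨p, hp, rfl, rfl⟩ := of_decide_eq_true h
      obtain ⟨q, hq, rfl, rfl⟩ := of_decide_eq_true h'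
      exact oddOne_eq_iff_of_parity _ _ _ _ (hw p) (hw q) hp hq (hpar p q))
  refine ⟨π, fun i => funext fun p =>
    apply_eq_apply_perm_of_oddOne (u · p) (u' · p) π (hw p) ?_ i⟩
  by_cases hc : ∀ k k', u k p = u k' p
  · exact .inl hc
  · exact .inr (hπ _ _ (decide_eq_true ⟨p, hc, rfl, rfl⟩))

lemma signedGram_self_eq_zero_iff (u u' : Fin 3 → Bits n) (p : Fin n) :
    signedGram u u' p p = 0 ↔ ∑ k, (u k p : ℕ) = ∑ k, (u' k p : ℕ) := by
  have key : ∀ a b : Fin 3 → Fin 2,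
      ∑ k, (((a k : ℕ) : ZMod 4) * (a k : ℕ) - ((b k : ℕ) : ZMod 4) * (b k : ℕ)) = 0 ↔
        ∑ k, (a k : ℕ) = ∑ k, (b k : ℕ) := by
    decide
  exact key (u · p) (u' · p)

lemma two_mul_signedGram_eq_zero_iff {ι : Type*} [Fintype ι] (u u' : ι → Bits n)
    (p q : Fin n) :
    2 * signedGram u u' p q = 0 ↔
      ∑ k, (((u k p : ℕ) : ZMod 2) * (u k q : ℕ) + ((u' k p : ℕ) : ZMod 2) * (u' k q : ℕ)) =
        0 := by
  have key : ∀ g : ZMod 4, 2 * g = 0 ↔ ZMod.castHom (by norm_num : 2 ∣ 4) (ZMod 2) g = 0 := by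
    decide
  rw [key, signedGram, of_apply, map_sum]
  simp only [map_sub, map_mul, map_natCast, CharTwo.sub_eq_add]

theorem memK2_append_iff (u u' : Fin 3 → Bits n) :
    MemK2 (Fin.append u u') ↔
      (∀ p, signedGram u u' p p = 0) ∧ ∀ p q, 2 * signedGram u u' p q = 0 := by
  simp only [signedGram_self_eq_zero_iff, two_mul_signedGram_eq_zero_iff]
  have hweight : (∀ p, ∑ k, (u k p : ℕ) = ∑ k, (u' k p : ℕ)) ↔
      ∀ p : Fin n, (Fin.append u u' 0 p : ℕ) + (Fin.append u u' 1 p : ℕ) +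
        (Fin.append u u' 2 p : ℕ) = (Fin.append u u' 3 p : ℕ) + (Fin.append u u' 4 p : ℕ) +
        (Fin.append u u' 5 p : ℕ) := by
    simp only [Fin.sum_univ_three]
    rfl
  rw [MemK2, ← hweight]
  refine ⟨fun ⟨hP, hW⟩ => ⟨hW, fun p q => ?_⟩, fun ⟨hW, hpar⟩ => ?_⟩
  · have hsum := hP.sum_eq_zero (fun x => ((x p : ℕ) : ZMod 2) * (x q : ℕ))
      fun _ => CharTwo.add_self_eq_zero _
    have hsplit := Fin.sum_univ_add (a := 3) (b := 3)
      fun k => ((Fin.append u u' k p : ℕ) : ZMod 2) * (Fin.append u u' k q : ℕ)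
    simp only [Fin.append_left, Fin.append_right] at hsplit
    rw [sum_add_distrib, ← hsplit]
    exact hsum
  · obtain ⟨π, hπ⟩ := exists_perm_of_parity hW hpar
    exact ⟨paired_append_of_perm π hπ, hW⟩

end

theorem espovm_third_moment_general (n : ℕ) :
    (((An n).card : ℂ))⁻¹ • ∑ A ∈ An n, kron3 (outer (phiEq A)) =
      ((8 : ℂ) ^ n)⁻¹ •
        ∑ v ∈ Finset.univ.filter (fun v : Fin 6 → Bits n => MemK2 v),
          Matrix.single (v 0, v 1, v 2) (v 3, v 4, v 5) (1 : ℂ) := by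
  ext ⟨x, y, z⟩ ⟨w, s, t⟩
  have happend : ![x, y, z, w, s, t] = Fin.append ![x, y, z] ![w, s, t] := by
    funext k; fin_cases k <;> rfl
  have hcard : ((An n).card : ℂ) ≠ 0 := Nat.cast_ne_zero.2 An_nonempty.card_pos.ne'
  rw [Matrix.smul_apply, Matrix.smul_apply, sum_single_memK2_apply, Matrix.sum_apply]
  simp only [happend, memK2_append_iff, kron3_outer_phiEq_apply, ← sum_div,
    sum_An_powI_pairing (signedGram_isSymm _ _), smul_eq_mul]
  split_ifs
  · field_simp
  · simp

/-- third moment of the complex equatorial stabilizer ensemble,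
expressed via the set `𝒦₂`. -/
theorem espovm_third_moment (n : ℕ) (hn : 1 ≤ n) :
    (((An n).card : ℂ))⁻¹ • ∑ A ∈ An n, kron3 (outer (phiEq A)) =
      ((8 : ℂ) ^ n)⁻¹ •
        ∑ v ∈ Finset.univ.filter (fun v : Fin 6 → Bits n => MemK2 v),
          Matrix.single (v 0, v 1, v 2) (v 3, v 4, v 5) (1 : ℂ) :=
  espovm_third_moment_general n
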